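/- Let n, k ∈ ℕ, let A ∈ ℝ^{2n×2k} be symplectic (Aᵀ J_{2n} A = J_{2k}) with A⁺ := J_{2k}ᵀ Aᵀ J_{2n}, and let u, v ∈ ℝ^{2n}. If A A⁺ v = v, or if A A⁺ u = u, then the reduced symplectic pairing equals the full one: (A⁺ u)ᵀ J_{2k} (A⁺ v) = uᵀ J_{2n} v. -/
import Mathlib


open Matrix

/-- The `2m × 2m` Poisson matrix `[[0, I], [-I, 0]]`, indexed by `Fin m ⊕ Fin m`. -/
noncomputable def Jmat (m : ℕ) : Matrix (Fin m ⊕ Fin m) (Fin m ⊕ Fin m) ℝ :=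
  Matrix.fromBlocks 0 1 (-1) 0

lemma Jmat_transpose (m : ℕ) : (Jmat m)ᵀ = -(Jmat m) := by
  rw [Jmat, Matrix.fromBlocks_transpose, Matrix.fromBlocks_neg]
  simp

lemma Jmat_mul_transpose (m : ℕ) : Jmat m * (Jmat m)ᵀ = 1 := by
  rw [Jmat_transpose, Matrix.mul_neg]
  have : Jmat m * Jmat m = -1 := by
    rw [Jmat, Matrix.fromBlocks_multiply, ← Matrix.fromBlocks_one,
      Matrix.fromBlocks_neg]
    simp
  rw [this, neg_neg]

lemma Jmat_antisym (m : ℕ) (x y : Fin m ⊕ Fin m → ℝ) :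
    x ⬝ᵥ (Jmat m).mulVec y = -(y ⬝ᵥ (Jmat m).mulVec x) := by
  rw [Matrix.dotProduct_mulVec, ← Matrix.mulVec_transpose, Jmat_transpose,
    Matrix.neg_mulVec, neg_dotProduct, dotProduct_comm]

/-- For symplectic `A` with `A⁺ := J_{2k}ᵀ Aᵀ J_{2n}`: if `AA⁺v = v` or `AA⁺u = u`,
then the reduced symplectic pairing equals the full one:
`ω(A⁺u, A⁺v) = Ω(u, v)`. -/
theorem stmt9 (n k : ℕ) (A : Matrix (Fin n ⊕ Fin n) (Fin k ⊕ Fin k) ℝ)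
    (hA : Aᵀ * Jmat n * A = Jmat k) (u v : Fin n ⊕ Fin n → ℝ)
    (h : A.mulVec (((Jmat k)ᵀ * Aᵀ * Jmat n).mulVec v) = v ∨
         A.mulVec (((Jmat k)ᵀ * Aᵀ * Jmat n).mulVec u) = u) :
    (((Jmat k)ᵀ * Aᵀ * Jmat n).mulVec u) ⬝ᵥ
        (Jmat k).mulVec (((Jmat k)ᵀ * Aᵀ * Jmat n).mulVec v)
      = u ⬝ᵥ (Jmat n).mulVec v := by
  have hJP : ∀ w : Fin n ⊕ Fin n → ℝ,
      (Jmat k).mulVec (((Jmat k)ᵀ * Aᵀ * Jmat n).mulVec w)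
        = Aᵀ.mulVec ((Jmat n).mulVec w) := by
    intro w
    rw [Matrix.mulVec_mulVec, ← Matrix.mul_assoc, ← Matrix.mul_assoc,
      Jmat_mul_transpose, Matrix.one_mul, ← Matrix.mulVec_mulVec]
  have key : ∀ w x : Fin n ⊕ Fin n → ℝ,
      (((Jmat k)ᵀ * Aᵀ * Jmat n).mulVec w) ⬝ᵥ
          (Jmat k).mulVec (((Jmat k)ᵀ * Aᵀ * Jmat n).mulVec x)
        = (A.mulVec (((Jmat k)ᵀ * Aᵀ * Jmat n).mulVec w)) ⬝ᵥ (Jmat n).mulVec x := by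
    intro w x
    rw [hJP, Matrix.dotProduct_mulVec, Matrix.vecMul_transpose]
  rcases h with hv | hu
  · have h1 : (((Jmat k)ᵀ * Aᵀ * Jmat n).mulVec v) ⬝ᵥ
        (Jmat k).mulVec (((Jmat k)ᵀ * Aᵀ * Jmat n).mulVec u) = v ⬝ᵥ (Jmat n).mulVec u := by
      rw [key v u, hv]
    rw [Jmat_antisym k, h1, ← Jmat_antisym n u v]
  · rw [key, hu]
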